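/- Let a be a binary sequence of length n which is not constant and satisfies a_1 ≠ a_n, with γ runs. Then for every k with 0 ≤ k ≤ n, C̃_k(a) = n − 2γk − 4·Σ_{j=1}^{k−1} (k−j)·R̃_j(a). -/

import Mathlib

/-- The `k`-th periodic autocorrelation of the sequence `a` of length `n`:
`C̃_k(a) = ∑_{i=1}^{n} a_i a_{i+k}`, where `a` is extended periodically
(so `C̃_n(a) = n` for a binary sequence). -/
def perCorr (a : ℕ → ℤ) (n k : ℕ) : ℤ :=
  ∑ i ∈ Finset.Icc 1 n, a i * a ((i + k - 1) % n + 1)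

/-- The length of the p-substring `r(i,j)` of a run length encoding with `γ` runs. -/
def plen (γ i j : ℕ) : ℕ := if i < j then j - i else γ + j - i

/-- The sum of the entries of the p-substring `r(i,j)`. -/
def psum (r : ℕ → ℕ) (γ i j : ℕ) : ℕ :=
  if i < j then ∑ u ∈ Finset.Icc i (j - 1), r u
  else (∑ u ∈ Finset.Icc i γ, r u) + ∑ u ∈ Finset.Icc 1 (j - 1), r u

/-- The `k`-th component of the periodic run vector: the sum of `(-1)^{|u|}` over
all p-substrings `u = r(i,j)` (`1 ≤ i,j ≤ γ`, `i ≠ j`) of `r` with sum `k`. -/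
def runVecPer (r : ℕ → ℕ) (γ k : ℕ) : ℤ :=
  ∑ p ∈ (Finset.Icc 1 γ ×ˢ Finset.Icc 1 γ).filter
      (fun p => p.1 ≠ p.2 ∧ psum r γ p.1 p.2 = k),
    (-1 : ℤ) ^ plen γ p.1 p.2

/-!
Index the sequence by `ZMod n`, so that `C̃_k` is the cyclic autocorrelation
`C k = ∑ₓ A x * A (x + k)`. Summing `(A x - A (x - 1)) * (A (x + k) - A (x + k - 1))` over `x`
gives `2 C k - C (k - 1) - C (k + 1)`. For a `±1` sequence the factor `A x - A (x - 1)` is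
`2 A x` at the start of a run and `0` elsewhere, so this second difference is
`4 ∑ A x * A (x + k)` over pairs of run starts at cyclic distance `k`. Such pairs are exactly the
p-substrings `r(u,v)` of sum `k`, and since the runs alternate in sign and `γ` is even,
`A x * A (x + k) = (-1)^|r(u,v)|`. So the second difference is `4 R̃_k` for `0 < k < n`, while
for `k = 0` it yields `C 1 = n - 2γ`; summing twice gives the closed form.
-/

open Finset

section Autocorrelation

variable {G R : Type*} [AddCommGroup G] [Fintype G] [CommRing R]

def cyclicAutocorr (A : G → R) (g : G) : R := ∑ x, A x * A (x + g)

theorem cyclicAutocorr_neg (A : G → R) (g : G) : cyclicAutocorr A (-g) = cyclicAutocorr A g := by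
  rw [cyclicAutocorr, ← Equiv.sum_comp (Equiv.addRight g) (fun x => A x * A (x + -g))]
  simp [cyclicAutocorr, mul_comm]

theorem sum_sub_mul_sub_eq_cyclicAutocorr (A : G → R) (g h : G) :
    ∑ x, (A x - A (x - h)) * (A (x + g) - A (x + g - h)) =
      2 * cyclicAutocorr A g - cyclicAutocorr A (g - h) - cyclicAutocorr A (g + h) := by
  have shift (g' : G) : ∑ x, A (x - h) * A (x + g') = cyclicAutocorr A (g' + h) := by
    rw [cyclicAutocorr, ← Equiv.sum_comp (Equiv.subRight h) (fun y => A y * A (y + (g' + h)))]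
    simp
  simp only [add_sub_assoc, sub_mul, mul_sub, sum_sub_distrib, shift, sub_add_cancel]
  simp only [cyclicAutocorr]
  ring

theorem two_mul_cyclicAutocorr_sub_sub_of_sign {A : G → ℤ} (hA : ∀ x, A x = 1 ∨ A x = -1)
    (g h : G) :
    2 * cyclicAutocorr A g - cyclicAutocorr A (g - h) - cyclicAutocorr A (g + h) =
      4 * ∑ x ∈ univ.filter (fun x => A x ≠ A (x - h) ∧ A (x + g) ≠ A (x + g - h)),
        A x * A (x + g) := by
  rw [← sum_sub_mul_sub_eq_cyclicAutocorr, sum_filter, mul_sum]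
  refine sum_congr rfl fun x _ => ?_
  rcases hA x with h1 | h1 <;> rcases hA (x - h) with h2 | h2 <;>
    rcases hA (x + g) with h3 | h3 <;> rcases hA (x + g - h) with h4 | h4 <;>
    simp [h1, h2, h3, h4]

theorem cyclicAutocorr_zero_of_sign {A : G → ℤ} (hA : ∀ x, A x = 1 ∨ A x = -1) :
    cyclicAutocorr A 0 = Fintype.card G := by
  rw [cyclicAutocorr, Fintype.card_eq_sum_ones, Nat.cast_sum]
  refine sum_congr rfl fun x _ => ?_
  rcases hA x with h | h <;> simp [h]

end Autocorrelation

theorem eq_add_mul_add_sum_Icc_of_second_diff {c e : ℕ → ℤ} {N : ℕ}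
    (h : ∀ j, 1 ≤ j → j < N → c (j + 1) - 2 * c j + c (j - 1) = e j) {m : ℕ} (hm : m ≤ N) :
    c m = c 0 + m * (c 1 - c 0) + ∑ j ∈ Icc 1 (m - 1), ((m : ℤ) - j) * e j := by
  have extend (p : ℕ) :
      ∑ j ∈ Icc 1 (p - 1), ((p : ℤ) - j) * e j = ∑ j ∈ Icc 1 p, ((p : ℤ) - j) * e j := by
    cases p with
    | zero => rfl
    | succ p => simp [sum_Icc_succ_top]
  induction m using Nat.strong_induction_on with
  | _ m ih =>
    match m, hm with
    | 0, _ => simp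
    | 1, _ => simp
    | m + 2, hm =>
      have hrec := h (m + 1) (by omega) (by omega)
      have hmid : ∑ j ∈ Icc 1 m, ((m + 2 : ℕ) - (j : ℤ)) * e j =
          2 * ∑ j ∈ Icc 1 m, ((m + 1 : ℕ) - (j : ℤ)) * e j -
            ∑ j ∈ Icc 1 m, ((m : ℤ) - j) * e j := by
        rw [mul_sum, ← sum_sub_distrib]
        exact sum_congr rfl fun j _ => by push_cast; ring
      simp only [Nat.add_sub_cancel] at hrec
      rw [ih (m + 1) (by omega) (by omega), ih m (by omega) (by omega), extend, extend,
        sum_Icc_succ_top (by omega)] at hrec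
      rw [extend, sum_Icc_succ_top (by omega), sum_Icc_succ_top (by omega), hmid]
      push_cast at hrec ⊢
      linear_combination hrec

def toCyclic (a : ℕ → ℤ) (n : ℕ) (x : ZMod n) : ℤ := a (x.val + 1)

theorem perCorr_eq_cyclicAutocorr (a : ℕ → ℤ) (n k : ℕ) [NeZero n] :
    perCorr a n k = cyclicAutocorr (toCyclic a n) k := by
  refine sum_nbij' (fun i => ((i - 1 : ℕ) : ZMod n)) (fun x => x.val + 1)
    (fun _ _ => mem_univ _) (fun x _ => by simpa using ZMod.val_lt x) (fun i hi => ?_)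
    (fun x _ => by simp) (fun i hi => ?_)
  all_goals
    obtain ⟨hi1, hin⟩ := mem_Icc.mp hi
    have hval : ((i - 1 : ℕ) : ZMod n).val = i - 1 := ZMod.val_natCast_of_lt (by omega)
  · simp only [hval]
    omega
  · rw [toCyclic, toCyclic, hval, ← Nat.cast_add, ZMod.val_natCast,
      Nat.sub_add_cancel hi1, Nat.sub_add_comm hi1]

theorem toCyclic_eq_one_or_neg_one {a : ℕ → ℤ} {n : ℕ} [NeZero n]
    (hbin : ∀ i, 1 ≤ i → i ≤ n → a i = 1 ∨ a i = -1) (x : ZMod n) :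
    toCyclic a n x = 1 ∨ toCyclic a n x = -1 :=
  hbin _ (Nat.le_add_left 1 _) (ZMod.val_lt x)

theorem neg_one_pow_plen {γ u v : ℕ} (hγ : Even γ) (hu : u ≤ γ) :
    (-1 : ℤ) ^ plen γ u v = (-1) ^ (u + v) := by
  rw [neg_one_pow_eq_pow_mod_two, neg_one_pow_eq_pow_mod_two (u + v)]
  obtain ⟨t, rfl⟩ := hγ
  unfold plen
  split_ifs <;> congr 1 <;> omega

def runStarts (n γ : ℕ) (I : ℕ → ℕ) : Finset (ZMod n) :=
  (Icc 1 γ).image fun u => ((I u - 1 : ℕ) : ZMod n)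

structure IsRunStarts (a : ℕ → ℤ) (n γ : ℕ) (I : ℕ → ℕ) : Prop where
  first : I 1 = 1
  last : I (γ + 1) = n + 1
  lt_succ : ∀ j, 1 ≤ j → j ≤ γ → I j < I (j + 1)
  apply_pred_ne : ∀ j, 2 ≤ j → j ≤ γ → a (I j - 1) ≠ a (I j)
  apply_eq : ∀ j, 1 ≤ j → j ≤ γ → ∀ p, I j ≤ p → p < I (j + 1) → a p = a (I j)

namespace IsRunStarts

variable {a : ℕ → ℤ} {n γ : ℕ} {I : ℕ → ℕ} {u v : ℕ}

theorem strictMonoOn (hI : IsRunStarts a n γ I) : StrictMonoOn I (Set.Icc 1 (γ + 1)) :=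
  strictMonoOn_of_lt_add_one Set.ordConnected_Icc fun j _ hj hj1 =>
    hI.lt_succ j hj.1 (by simp only [Set.mem_Icc] at hj1; omega)

theorem lt_of_lt (hI : IsRunStarts a n γ I) (hu : 1 ≤ u) (huv : u < v) (hv : v ≤ γ + 1) :
    I u < I v :=
  hI.strictMonoOn ⟨hu, by omega⟩ ⟨by omega, hv⟩ huv

theorem one_le_and_le (hI : IsRunStarts a n γ I) (hu : 1 ≤ u) (huγ : u ≤ γ) :
    1 ≤ I u ∧ I u ≤ n := by
  have h1 := hI.strictMonoOn.monotoneOn ⟨le_rfl, by omega⟩ ⟨hu, by omega⟩ hu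
  have h2 := hI.lt_of_lt hu (Nat.lt_succ_of_le huγ) le_rfl
  rw [hI.first] at h1
  rw [hI.last] at h2
  omega

theorem exists_mem_run (hI : IsRunStarts a n γ I) {p : ℕ} (hp : 1 ≤ p) (hpn : p ≤ n) :
    ∃ u, 1 ≤ u ∧ u ≤ γ ∧ I u ≤ p ∧ p < I (u + 1) := by
  suffices ∀ v ≤ γ, p < I (v + 1) → ∃ u, 1 ≤ u ∧ u ≤ v ∧ I u ≤ p ∧ p < I (u + 1) by
    obtain ⟨u, hu, huv, hrun⟩ := this γ le_rfl (by rw [hI.last]; omega)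
    exact ⟨u, hu, huv, hrun⟩
  intro v
  induction v with
  | zero => intro _ h; rw [zero_add, hI.first] at h; omega
  | succ v ih =>
    intro hv hp'
    by_cases h : p < I (v + 1)
    · obtain ⟨u, hu, huv, hrun⟩ := ih (by omega) h
      exact ⟨u, hu, by omega, hrun⟩
    · exact ⟨v + 1, by omega, le_rfl, by omega, hp'⟩

theorem apply_pred_ne_iff (hI : IsRunStarts a n γ I) {q : ℕ} (hq : 2 ≤ q) (hqn : q ≤ n) :
    a (q - 1) ≠ a q ↔ ∃ u, 2 ≤ u ∧ u ≤ γ ∧ I u = q := by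
  constructor
  · intro hne
    obtain ⟨u, hu, huγ, hIu, hq'⟩ := hI.exists_mem_run (p := q) (by omega) hqn
    have hIuq : I u = q := by
      by_contra h
      exact hne ((hI.apply_eq u hu huγ _ (by omega) (by omega)).trans
        (hI.apply_eq u hu huγ q hIu hq').symm)
    refine ⟨u, ?_, huγ, hIuq⟩
    by_contra h
    obtain rfl : u = 1 := by omega
    rw [hI.first] at hIuq
    omega
  · rintro ⟨u, hu, huγ, rfl⟩
    exact hI.apply_pred_ne u hu huγ

theorem apply_eq_neg_one_pow (hI : IsRunStarts a n γ I)
    (hbin : ∀ i, 1 ≤ i → i ≤ n → a i = 1 ∨ a i = -1) (hu : 1 ≤ u) (huγ : u ≤ γ) :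
    a (I u) = (-1) ^ (u - 1) * a 1 := by
  induction u, hu using Nat.le_induction with
  | base => simp [hI.first]
  | succ u hu ih =>
    obtain ⟨h1, hn⟩ := hI.one_le_and_le (u := u + 1) (by omega) huγ
    obtain ⟨h1', hn'⟩ := hI.one_le_and_le hu (by omega)
    have hlt := hI.lt_of_lt hu (lt_add_one u) (by omega)
    have hflip : a (I (u + 1)) = -a (I u) := by
      have hrun := hI.apply_eq u hu (by omega) (I (u + 1) - 1) (by omega) (by omega)
      have hne := hI.apply_pred_ne (u + 1) (by omega) huγ
      have := hbin (I u) h1' hn'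
      have := hbin (I (u + 1)) h1 hn
      omega
    obtain ⟨w, rfl⟩ : ∃ w, u = w + 1 := ⟨u - 1, by omega⟩
    rw [hflip, ih (by omega)]
    simp [pow_succ]

theorem even (hI : IsRunStarts a n γ I) (hbin : ∀ i, 1 ≤ i → i ≤ n → a i = 1 ∨ a i = -1)
    (h1n : a 1 ≠ a n) : Even γ := by
  rcases Nat.eq_zero_or_pos γ with rfl | hγ
  · exact ⟨0, rfl⟩
  have hlast : a n = a (I γ) :=
    hI.apply_eq γ hγ le_rfl n (hI.one_le_and_le hγ le_rfl).2 (by rw [hI.last]; omega)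
  by_contra hodd
  obtain ⟨t, ht⟩ := Nat.not_even_iff_odd.mp hodd
  rw [hI.apply_eq_neg_one_pow hbin hγ le_rfl, Even.neg_one_pow ⟨t, by omega⟩, one_mul] at hlast
  exact h1n hlast.symm

variable {r : ℕ → ℕ}

theorem cast_sum_Icc_eq_sub (hI : IsRunStarts a n γ I)
    (hr : ∀ j, 1 ≤ j → j ≤ γ → r j = I (j + 1) - I j)
    (hu : 1 ≤ u) (huv : u ≤ v) (hv : v ≤ γ + 1) :
    ((∑ w ∈ Icc u (v - 1), r w : ℕ) : ℤ) = I v - I u := by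
  obtain ⟨v, rfl⟩ : ∃ w, v = w + 1 := ⟨v - 1, by omega⟩
  rw [Nat.add_sub_cancel, ← Ico_add_one_right_eq_Icc, Nat.cast_sum,
    ← sum_Ico_sub (fun w => (I w : ℤ)) huv]
  refine sum_congr rfl fun w hw => ?_
  obtain ⟨hw1, hw2⟩ := mem_Ico.mp hw
  have := hI.lt_of_lt (by omega) (lt_add_one w) (by omega)
  rw [hr w (by omega) (by omega)]
  omega

theorem psum_eq (hI : IsRunStarts a n γ I) (hr : ∀ j, 1 ≤ j → j ≤ γ → r j = I (j + 1) - I j)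
    (hu : 1 ≤ u) (huγ : u ≤ γ) (hv : 1 ≤ v) (hvγ : v ≤ γ) :
    (psum r γ u v : ℤ) = I v - I u + if u < v then 0 else (n : ℤ) := by
  unfold psum
  split_ifs with h
  · rw [hI.cast_sum_Icc_eq_sub hr hu h.le (by omega), add_zero]
  · have htail := hI.cast_sum_Icc_eq_sub hr hu (v := γ + 1) (by omega) le_rfl
    rw [Nat.add_sub_cancel] at htail
    rw [Nat.cast_add, htail, hI.cast_sum_Icc_eq_sub hr le_rfl hv (by omega), hI.last, hI.first]
    push_cast
    ring

theorem pos [NeZero n] (hI : IsRunStarts a n γ I) : 0 < γ := by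
  by_contra h
  have := hI.last
  rw [show γ = 0 by omega, zero_add, hI.first] at this
  exact NeZero.ne n (by omega)

theorem natCast_pred_injOn (hI : IsRunStarts a n γ I) (hu : 1 ≤ u) (huγ : u ≤ γ) (hv : 1 ≤ v)
    (hvγ : v ≤ γ) (h : ((I u - 1 : ℕ) : ZMod n) = ((I v - 1 : ℕ) : ZMod n)) : u = v := by
  have hu' := hI.one_le_and_le hu huγ
  have hv' := hI.one_le_and_le hv hvγ
  have h' := congrArg ZMod.val h
  rw [ZMod.val_natCast_of_lt (by omega), ZMod.val_natCast_of_lt (by omega)] at h'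
  exact hI.strictMonoOn.injOn ⟨hu, by omega⟩ ⟨hv, by omega⟩ (by omega)

theorem card_runStarts (hI : IsRunStarts a n γ I) : (runStarts n γ I).card = γ := by
  rw [runStarts, card_image_of_injOn, Nat.card_Icc, Nat.add_sub_cancel]
  intro u hu v hv h
  simp only [coe_Icc, Set.mem_Icc] at hu hv
  exact hI.natCast_pred_injOn hu.1 hu.2 hv.1 hv.2 h

theorem natCast_mem_runStarts_iff (hI : IsRunStarts a n γ I) {m : ℕ} (hm : m < n) :
    (m : ZMod n) ∈ runStarts n γ I ↔ ∃ u, 1 ≤ u ∧ u ≤ γ ∧ I u = m + 1 := by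
  simp only [runStarts, mem_image, mem_Icc]
  refine exists_congr fun u =>
    ⟨fun ⟨⟨hu, huγ⟩, h⟩ => ⟨hu, huγ, ?_⟩, fun ⟨hu, huγ, h⟩ => ⟨⟨hu, huγ⟩, ?_⟩⟩
  · have := hI.one_le_and_le hu huγ
    have h' := congrArg ZMod.val h
    rw [ZMod.val_natCast_of_lt (by omega), ZMod.val_natCast_of_lt hm] at h'
    omega
  · rw [h, Nat.add_sub_cancel]

theorem toCyclic_natCast_pred (hI : IsRunStarts a n γ I) (hu : 1 ≤ u) (huγ : u ≤ γ) :
    toCyclic a n ((I u - 1 : ℕ) : ZMod n) = a (I u) := by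
  have := hI.one_le_and_le hu huγ
  rw [toCyclic, ZMod.val_natCast_of_lt (by omega), Nat.sub_add_cancel this.1]

theorem toCyclic_ne_sub_one_iff [NeZero n] (hI : IsRunStarts a n γ I) (h1n : a 1 ≠ a n)
    (x : ZMod n) : toCyclic a n x ≠ toCyclic a n (x - 1) ↔ x ∈ runStarts n γ I := by
  obtain ⟨p, hp, rfl⟩ : ∃ p < n, x = ((p + 1 : ℕ) : ZMod n) :=
    ⟨(x - 1).val, ZMod.val_lt _, by simp⟩
  have hsub : ((p + 1 : ℕ) : ZMod n) - 1 = (p : ZMod n) := by push_cast; ring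
  rw [hsub, toCyclic, toCyclic, ZMod.val_natCast_of_lt hp]
  rcases (show p + 1 ≤ n from hp).eq_or_lt with hpn | hpn
  · have hzero := hI.natCast_mem_runStarts_iff (m := 0) (Nat.pos_of_neZero n)
    rw [Nat.cast_zero] at hzero
    rw [hpn, ZMod.natCast_self, ZMod.val_zero, hzero]
    exact iff_of_true h1n ⟨1, le_rfl, hI.pos, hI.first⟩
  · have hchange := hI.apply_pred_ne_iff (q := p + 1 + 1) (by omega) hpn
    rw [Nat.add_sub_cancel] at hchange
    rw [ZMod.val_natCast_of_lt hpn, hI.natCast_mem_runStarts_iff hpn, ne_comm, hchange]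
    refine ⟨fun ⟨u, _, huγ, h⟩ => ⟨u, by omega, huγ, h⟩, fun ⟨u, hu, huγ, h⟩ => ⟨u, ?_, huγ, h⟩⟩
    by_contra hu2
    rw [show u = 1 by omega, hI.first] at h
    omega

theorem psum_lt (hI : IsRunStarts a n γ I) (hr : ∀ j, 1 ≤ j → j ≤ γ → r j = I (j + 1) - I j)
    (hu : 1 ≤ u) (huγ : u ≤ γ) (hv : 1 ≤ v) (hvγ : v ≤ γ) (huv : u ≠ v) : psum r γ u v < n := by
  have h := hI.psum_eq hr hu huγ hv hvγ
  have := hI.one_le_and_le hu huγ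
  have := hI.one_le_and_le hv hvγ
  rcases lt_or_gt_of_ne huv with h' | h'
  · rw [if_pos h'] at h
    omega
  · have := hI.lt_of_lt hv h' (by omega)
    rw [if_neg (by omega)] at h
    omega

theorem natCast_pred_add_psum (hI : IsRunStarts a n γ I)
    (hr : ∀ j, 1 ≤ j → j ≤ γ → r j = I (j + 1) - I j) (hu : 1 ≤ u) (huγ : u ≤ γ) (hv : 1 ≤ v)
    (hvγ : v ≤ γ) :
    ((I u - 1 : ℕ) : ZMod n) + (psum r γ u v : ZMod n) = ((I v - 1 : ℕ) : ZMod n) := by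
  have h := hI.psum_eq hr hu huγ hv hvγ
  have := hI.one_le_and_le hu huγ
  have := hI.one_le_and_le hv hvγ
  rw [← Nat.cast_add]
  split_ifs at h
  · rw [show I u - 1 + psum r γ u v = I v - 1 by omega]
  · rw [show I u - 1 + psum r γ u v = I v - 1 + n by omega, Nat.cast_add, ZMod.natCast_self,
      add_zero]

theorem toCyclic_natCast_pred_mul (hI : IsRunStarts a n γ I)
    (hbin : ∀ i, 1 ≤ i → i ≤ n → a i = 1 ∨ a i = -1) (h1n : a 1 ≠ a n) (hu : 1 ≤ u)
    (huγ : u ≤ γ) (hv : 1 ≤ v) (hvγ : v ≤ γ) :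
    toCyclic a n ((I u - 1 : ℕ) : ZMod n) * toCyclic a n ((I v - 1 : ℕ) : ZMod n) =
      (-1) ^ plen γ u v := by
  have ha1 : a 1 * a 1 = 1 := by
    rcases hbin 1 le_rfl (by have := hI.one_le_and_le hu huγ; omega) with h | h <;> simp [h]
  rw [hI.toCyclic_natCast_pred hu huγ, hI.toCyclic_natCast_pred hv hvγ,
    hI.apply_eq_neg_one_pow hbin hu huγ, hI.apply_eq_neg_one_pow hbin hv hvγ,
    neg_one_pow_plen (hI.even hbin h1n) huγ]
  obtain ⟨u, rfl⟩ : ∃ w, u = w + 1 := ⟨u - 1, by omega⟩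
  obtain ⟨v, rfl⟩ : ∃ w, v = w + 1 := ⟨v - 1, by omega⟩
  simp only [Nat.add_sub_cancel]
  linear_combination (-1 : ℤ) ^ (u + v) * ha1

theorem sum_filter_add_mem_runStarts (hI : IsRunStarts a n γ I)
    (hbin : ∀ i, 1 ≤ i → i ≤ n → a i = 1 ∨ a i = -1) (h1n : a 1 ≠ a n)
    (hr : ∀ j, 1 ≤ j → j ≤ γ → r j = I (j + 1) - I j) {j : ℕ} (hj : 1 ≤ j) (hjn : j < n) :
    ∑ x ∈ (runStarts n γ I).filter (fun x => x + (j : ZMod n) ∈ runStarts n γ I),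
      toCyclic a n x * toCyclic a n (x + j) = runVecPer r γ j := by
  symm
  refine sum_bij (fun p _ => ((I p.1 - 1 : ℕ) : ZMod n)) ?_ ?_ ?_ ?_
  · rintro ⟨u, v⟩ hp
    simp only [mem_filter, mem_product, mem_Icc] at hp
    obtain ⟨⟨⟨hu, huγ⟩, hv, hvγ⟩, -, rfl⟩ := hp
    rw [mem_filter, hI.natCast_pred_add_psum hr hu huγ hv hvγ]
    exact ⟨mem_image_of_mem _ (mem_Icc.2 ⟨hu, huγ⟩), mem_image_of_mem _ (mem_Icc.2 ⟨hv, hvγ⟩)⟩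
  · rintro ⟨u, v⟩ hp ⟨u', v'⟩ hp' h
    simp only [mem_filter, mem_product, mem_Icc] at hp hp'
    obtain ⟨⟨⟨hu, huγ⟩, hv, hvγ⟩, -, hpj⟩ := hp
    obtain ⟨⟨⟨hu', hu'γ⟩, hv', hv'γ⟩, -, hpj'⟩ := hp'
    obtain rfl := hI.natCast_pred_injOn hu huγ hu' hu'γ h
    have e := hI.natCast_pred_add_psum (n := n) hr hu huγ hv hvγ
    rw [hpj, ← hpj', hI.natCast_pred_add_psum hr hu huγ hv' hv'γ] at e
    rw [hI.natCast_pred_injOn hv' hv'γ hv hvγ e]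
  · intro x hx
    obtain ⟨hx, hxj⟩ := mem_filter.1 hx
    obtain ⟨u, hu, rfl⟩ := mem_image.1 hx
    obtain ⟨v, hv, hveq⟩ := mem_image.1 hxj
    rw [mem_Icc] at hu hv
    have huv : u ≠ v := by
      rintro rfl
      have hj0 := congrArg ZMod.val (left_eq_add.1 hveq)
      rw [ZMod.val_natCast_of_lt hjn, ZMod.val_zero] at hj0
      omega
    have hpsum := hI.natCast_pred_add_psum (n := n) hr hu.1 hu.2 hv.1 hv.2
    rw [hveq, add_left_cancel_iff] at hpsum
    have hval := congrArg ZMod.val hpsum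
    rw [ZMod.val_natCast_of_lt (hI.psum_lt hr hu.1 hu.2 hv.1 hv.2 huv),
      ZMod.val_natCast_of_lt hjn] at hval
    exact ⟨(u, v), by simp only [mem_filter, mem_product, mem_Icc]; exact ⟨⟨hu, hv⟩, huv, hval⟩,
      rfl⟩
  · rintro ⟨u, v⟩ hp
    simp only [mem_filter, mem_product, mem_Icc] at hp
    obtain ⟨⟨⟨hu, huγ⟩, hv, hvγ⟩, -, rfl⟩ := hp
    rw [hI.natCast_pred_add_psum hr hu huγ hv hvγ,
      hI.toCyclic_natCast_pred_mul hbin h1n hu huγ hv hvγ]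

theorem two_mul_cyclicAutocorr_sub_sub [NeZero n] (hI : IsRunStarts a n γ I)
    (hbin : ∀ i, 1 ≤ i → i ≤ n → a i = 1 ∨ a i = -1) (h1n : a 1 ≠ a n) (g : ZMod n) :
    2 * cyclicAutocorr (toCyclic a n) g - cyclicAutocorr (toCyclic a n) (g - 1) -
        cyclicAutocorr (toCyclic a n) (g + 1) =
      4 * ∑ x ∈ (runStarts n γ I).filter (fun x => x + g ∈ runStarts n γ I),
        toCyclic a n x * toCyclic a n (x + g) := by
  rw [two_mul_cyclicAutocorr_sub_sub_of_sign (toCyclic_eq_one_or_neg_one hbin) g 1,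
    ← filter_univ_mem (runStarts n γ I), filter_filter]
  congr 2
  exact filter_congr fun x _ => by
    simp only [hI.toCyclic_ne_sub_one_iff h1n, mem_filter, mem_univ, true_and]

end IsRunStarts

theorem stmt_19_general (n γ : ℕ) (hn : 1 ≤ n) (a : ℕ → ℤ)
    (hbin : ∀ i, 1 ≤ i → i ≤ n → a i = 1 ∨ a i = -1)
    (h1n : a 1 ≠ a n)
    -- `I j` (for `1 ≤ j ≤ γ+1`) are the starting positions of the runs of `a`:
    (I : ℕ → ℕ) (hI1 : I 1 = 1) (hIlast : I (γ + 1) = n + 1)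
    (hImono : ∀ j, 1 ≤ j → j ≤ γ → I j < I (j + 1))
    (hchange : ∀ j, 2 ≤ j → j ≤ γ → a (I j - 1) ≠ a (I j))
    (hconst : ∀ j, 1 ≤ j → j ≤ γ → ∀ p, I j ≤ p → p < I (j + 1) → a p = a (I j))
    -- the run length encoding `r`:
    (r : ℕ → ℕ) (hr : ∀ j, 1 ≤ j → j ≤ γ → r j = I (j + 1) - I j)
    (k : ℕ) (hk : k ≤ n) :
    perCorr a n k = (n : ℤ) - 2 * (γ : ℤ) * k
      - 4 * ∑ j ∈ Finset.Icc 1 (k - 1), ((k : ℤ) - j) * runVecPer r γ j := by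
  have : NeZero n := ⟨by omega⟩
  have hI : IsRunStarts a n γ I := ⟨hI1, hIlast, hImono, hchange, hconst⟩
  set c : ℕ → ℤ := fun m => cyclicAutocorr (toCyclic a n) (m : ZMod n)
  have hc0 : c 0 = n := by
    simp [c, cyclicAutocorr_zero_of_sign (toCyclic_eq_one_or_neg_one hbin)]
  have hc1 : c 1 = n - 2 * γ := by
    have h := hI.two_mul_cyclicAutocorr_sub_sub hbin h1n 0
    have hsq (x : ZMod n) : toCyclic a n x * toCyclic a n x = 1 := by
      rcases toCyclic_eq_one_or_neg_one hbin x with hx | hx <;> simp [hx]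
    simp only [zero_sub, cyclicAutocorr_neg, zero_add, add_zero, hsq,
      filter_true_of_mem fun x hx => hx, sum_const, hI.card_runStarts, nsmul_one] at h
    simp only [c, Nat.cast_one, Nat.cast_zero] at hc0 ⊢
    linarith
  have hrec (j : ℕ) (hj : 1 ≤ j) (hjn : j < n) :
      c (j + 1) - 2 * c j + c (j - 1) = -4 * runVecPer r γ j := by
    have h := hI.two_mul_cyclicAutocorr_sub_sub hbin h1n j
    rw [hI.sum_filter_add_mem_runStarts hbin h1n hr hj hjn] at h
    simp only [c, Nat.cast_add, Nat.cast_one, Nat.cast_pred hj]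
    linarith
  rw [perCorr_eq_cyclicAutocorr]
  change c k = _
  have hsum : ∑ j ∈ Icc 1 (k - 1), ((k : ℤ) - j) * (-4 * runVecPer r γ j) =
      -4 * ∑ j ∈ Icc 1 (k - 1), ((k : ℤ) - j) * runVecPer r γ j := by
    rw [mul_sum]
    exact sum_congr rfl fun j _ => by ring
  rw [eq_add_mul_add_sum_Icc_of_second_diff hrec hk, hc0, hc1, hsum]
  ring

theorem stmt_19 (n γ : ℕ) (hn : 1 ≤ n) (a : ℕ → ℤ)
    (hbin : ∀ i, 1 ≤ i → i ≤ n → a i = 1 ∨ a i = -1)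
    (h0 : a 0 = 0)
    (hnc : ∃ i j, 1 ≤ i ∧ i ≤ n ∧ 1 ≤ j ∧ j ≤ n ∧ a i ≠ a j)
    (h1n : a 1 ≠ a n)
    -- `I j` (for `1 ≤ j ≤ γ+1`) are the starting positions of the runs of `a`:
    (I : ℕ → ℕ) (hI1 : I 1 = 1) (hIlast : I (γ + 1) = n + 1)
    (hImono : ∀ j, 1 ≤ j → j ≤ γ → I j < I (j + 1))
    (hchange : ∀ j, 2 ≤ j → j ≤ γ → a (I j - 1) ≠ a (I j))
    (hconst : ∀ j, 1 ≤ j → j ≤ γ → ∀ p, I j ≤ p → p < I (j + 1) → a p = a (I j))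
    -- the run length encoding `r`:
    (r : ℕ → ℕ) (hr : ∀ j, 1 ≤ j → j ≤ γ → r j = I (j + 1) - I j)
    (k : ℕ) (hk : k ≤ n) :
    perCorr a n k = (n : ℤ) - 2 * (γ : ℤ) * k
      - 4 * ∑ j ∈ Finset.Icc 1 (k - 1), ((k : ℤ) - j) * runVecPer r γ j :=
  stmt_19_general n γ hn a hbin h1n I hI1 hIlast hImono hchange hconst r hr k hk
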